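/- For any two quaternionic n×n matrices X and Y, the squared Frobenius norm of the commutator satisfies ‖[X,Y]‖² ≤ 4‖X‖²‖Y‖², and this constant 4 is attained by X = i·I₁ and Y = j·I₁ (the 1×1 matrices i and j). -/

import Mathlib

open Matrix Quaternion

/-!
With respect to the Frobenius norm, matrices over any normed ring are submultiplicative: each
entry of `A * B` is bounded by Cauchy–Schwarz applied to the row norms of `A` and the column norms
of `B`. Hence `‖XY - YX‖ ≤ ‖XY‖ + ‖YX‖ ≤ 2‖X‖‖Y‖`, and over `ℍ` the quantity `Re tr(A A*)` is
exactly `‖A‖²`, since `Re (a * star a) = ‖a‖²`. Equality for `i` and `j` holds because they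
anticommute: `ij - ji = 2k`.
-/

attribute [local instance] Matrix.frobeniusSeminormedAddCommGroup

namespace Matrix

variable {l m n α : Type*} [Fintype l] [Fintype m] [Fintype n]

theorem frobenius_norm_sq_eq_sum [SeminormedAddCommGroup α] (A : Matrix m n α) :
    ‖A‖ ^ 2 = ∑ i, ∑ j, ‖A i j‖ ^ 2 := by
  rw [frobenius_norm_def, ← Real.rpow_natCast, ← Real.rpow_mul (by positivity)]
  norm_num

theorem frobenius_norm_mul_le [NonUnitalSeminormedRing α] (A : Matrix l m α) (B : Matrix m n α) :
    ‖A * B‖ ≤ ‖A‖ * ‖B‖ := by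
  have entry_le (i : l) (j : n) :
      ‖(A * B) i j‖ ^ 2 ≤ (∑ k, ‖A i k‖ ^ 2) * ∑ k, ‖B k j‖ ^ 2 :=
    calc ‖(A * B) i j‖ ^ 2 ≤ (∑ k, ‖A i k‖ * ‖B k j‖) ^ 2 := by
          gcongr
          exact (norm_sum_le _ _).trans (Finset.sum_le_sum fun k _ ↦ norm_mul_le _ _)
      _ ≤ _ := Finset.sum_mul_sq_le_sq_mul_sq _ _ _
  rw [← pow_le_pow_iff_left₀ (norm_nonneg _) (by positivity) two_ne_zero, mul_pow,
    frobenius_norm_sq_eq_sum, frobenius_norm_sq_eq_sum, frobenius_norm_sq_eq_sum,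
    Finset.sum_comm (f := fun k j ↦ ‖B k j‖ ^ 2), Finset.sum_mul_sum]
  exact Finset.sum_le_sum fun i _ ↦ Finset.sum_le_sum fun j _ ↦ entry_le i j

theorem frobenius_norm_commutator_le [NonUnitalSeminormedRing α] (X Y : Matrix n n α) :
    ‖X * Y - Y * X‖ ≤ 2 * ‖X‖ * ‖Y‖ :=
  calc ‖X * Y - Y * X‖ ≤ ‖X * Y‖ + ‖Y * X‖ := norm_sub_le _ _
    _ ≤ ‖X‖ * ‖Y‖ + ‖Y‖ * ‖X‖ :=
      add_le_add (frobenius_norm_mul_le X Y) (frobenius_norm_mul_le Y X)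
    _ = 2 * ‖X‖ * ‖Y‖ := by ring

theorem re_trace_mul_conjTranspose_self_eq_sum (A : Matrix m n ℍ[ℝ]) :
    (trace (A * Aᴴ)).re = ∑ i, ∑ j, ‖A i j‖ ^ 2 := by
  simp only [trace, diag, mul_apply, conjTranspose_apply, self_mul_star, normSq_eq_norm_mul_self,
    ← sq, ← algebraMap_def, ← map_sum]
  rfl

theorem re_trace_mul_conjTranspose_self (A : Matrix m n ℍ[ℝ]) :
    (trace (A * Aᴴ)).re = ‖A‖ ^ 2 := by
  rw [re_trace_mul_conjTranspose_self_eq_sum, frobenius_norm_sq_eq_sum]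

end Matrix

/-- BW-type inequality for quaternionic matrices, with sharpness of the constant 4,
attained by the 1×1 matrices `i` and `j`. -/
theorem bw_quaternion :
    (∀ (n : ℕ) (X Y : Matrix (Fin n) (Fin n) ℍ[ℝ]),
        (trace ((X * Y - Y * X) * (X * Y - Y * X)ᴴ)).re ≤
          4 * (trace (X * Xᴴ)).re * (trace (Y * Yᴴ)).re) ∧
    (let X : Matrix (Fin 1) (Fin 1) ℍ[ℝ] := fun _ _ => (⟨0, 1, 0, 0⟩ : ℍ[ℝ])
     let Y : Matrix (Fin 1) (Fin 1) ℍ[ℝ] := fun _ _ => (⟨0, 0, 1, 0⟩ : ℍ[ℝ])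
     (trace ((X * Y - Y * X) * (X * Y - Y * X)ᴴ)).re =
       4 * (trace (X * Xᴴ)).re * (trace (Y * Yᴴ)).re) := by
  constructor
  · intro n X Y
    simp only [re_trace_mul_conjTranspose_self]
    calc ‖X * Y - Y * X‖ ^ 2 ≤ (2 * ‖X‖ * ‖Y‖) ^ 2 :=
          pow_le_pow_left₀ (norm_nonneg _) (frobenius_norm_commutator_le X Y) 2
      _ = 4 * ‖X‖ ^ 2 * ‖Y‖ ^ 2 := by ring
  · intro X Y
    have commutator_entry : (X * Y - Y * X) 0 0 = ⟨0, 0, 0, 2⟩ := by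
      ext <;> simp only [Matrix.sub_apply, mul_apply, Fin.sum_univ_one, re_sub, imI_sub, imJ_sub,
        imK_sub, re_mul, imI_mul, imJ_mul, imK_mul] <;> norm_num [X, Y]
    simp only [re_trace_mul_conjTranspose_self_eq_sum, Fin.sum_univ_one, commutator_entry, sq,
      ← normSq_eq_norm_mul_self, normSq_def']
    norm_num [X, Y]
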